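/- Assume the continuum hypothesis. Let I and J be F_σ ideals on ω. Then J ≤_BW I if and only if every topological space with the BW(I) property also has the BW(J) property. -/

import Mathlib

open Set Filter Topology

/-- An ideal on a set `M`: closed under subsets and finite unions, contains all
finite sets, and is proper. -/
structure IsIdeal {M : Type*} (I : Set (Set M)) : Prop where
  mem_of_subset : ∀ ⦃A B : Set M⦄, A ⊆ B → B ∈ I → A ∈ I
  union_mem : ∀ ⦃A B : Set M⦄, A ∈ I → B ∈ I → A ∪ B ∈ I
  finite_mem : ∀ ⦃A : Set M⦄, A.Finite → A ∈ I
  univ_not_mem : (Set.univ : Set M) ∉ I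

/-- `BWle I J` formalizes `I ≤_BW J`, where `I` is an ideal on `N` and `J` is an
ideal on `M`: there is `f : M → N` such that for every `J`-positive `A` there is an
`I`-positive `B ⊆ f[A]` such that for every `C` with `C ∩ B` `I`-positive, the set
`A ∩ f⁻¹[C]` is `J`-positive. -/
def BWle {N M : Type*} (I : Set (Set N)) (J : Set (Set M)) : Prop :=
  ∃ f : M → N, ∀ A : Set M, A ∉ J →
    ∃ B : Set N, B ⊆ f '' A ∧ B ∉ I ∧
      ∀ C : Set N, C ∩ B ∉ I → A ∩ f ⁻¹' C ∉ J

/-- The `BW(I)` property of a topological space `X`, for an ideal `I` on `M`: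
every sequence `(x_m)_{m ∈ M}` in `X` admits an `I`-positive set `A` on which it is
`I`-convergent to some point. -/
def BWProp {M : Type*} (I : Set (Set M)) (X : Type*) [TopologicalSpace X] : Prop :=
  ∀ x : M → X, ∃ A : Set M, A ∉ I ∧ ∃ p : X,
    ∀ U : Set X, IsOpen U → p ∈ U → {n ∈ A | x n ∉ U} ∈ I

/-- The ideal `Fin` of finite subsets of `ω`. -/
def FinIdeal : Set (Set ℕ) := {A : Set ℕ | A.Finite}

/-- A set in a topological space is `F_σ` if it is a countable union of closed sets. -/
def IsFsigmaSet {X : Type*} [TopologicalSpace X] (s : Set X) : Prop :=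
  ∃ F : ℕ → Set X, (∀ n, IsClosed (F n)) ∧ s = ⋃ n, F n

/-- An ideal on `ω` is `F_σ` if, identified with a subset of the Cantor space
`2^ω` via characteristic functions, it is a countable union of closed sets. -/
def IsFsigmaIdeal (I : Set (Set ℕ)) : Prop :=
  IsFsigmaSet {x : ℕ → Bool | {n : ℕ | x n = true} ∈ I}

section Construction

open Classical in
/-- characteristic function of a set of naturals -/
noncomputable def chiFn (B : Set ℕ) : ℕ → Bool := fun n => if n ∈ B then true else false

lemma chiFn_mem_iff (B : Set ℕ) (n : ℕ) : chiFn B n = true ↔ n ∈ B := by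
  simp only [chiFn]; by_cases h : n ∈ B <;> simp [h]

lemma chiFn_set (B : Set ℕ) : {n : ℕ | chiFn B n = true} = B := by
  ext n; simp [chiFn_mem_iff]

variable {I J : Set (Set ℕ)}

namespace IsIdeal

lemma empty_mem (hI : IsIdeal I) : (∅ : Set ℕ) ∈ I :=
  hI.finite_mem Set.finite_empty

lemma not_mem_of_superset (hI : IsIdeal I) {A B : Set ℕ} (h : A ∉ I) (hAB : A ⊆ B) : B ∉ I :=
  fun hB => h (hI.mem_of_subset hAB hB)

lemma diff_finite_not_mem (hI : IsIdeal I) {B F : Set ℕ} (hB : B ∉ I) (hF : F.Finite) :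
    B \ F ∉ I := by
  intro h
  apply hB
  have hsub : B ⊆ (B \ F) ∪ F := by
    intro x hx
    by_cases hxF : x ∈ F
    · exact Or.inr hxF
    · exact Or.inl ⟨hx, hxF⟩
  exact hI.mem_of_subset hsub (hI.union_mem h (hI.finite_mem hF))

lemma biUnion_finite_mem (hI : IsIdeal I) {s : Set ℕ} (hs : s.Finite) (f : ℕ → Set ℕ) :
    (∀ m ∈ s, f m ∈ I) → (⋃ m ∈ s, f m) ∈ I := by
  refine Set.Finite.induction_on (motive := fun s _ => (∀ m ∈ s, f m ∈ I) → (⋃ m ∈ s, f m) ∈ I) s hs ?_ ?_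
  · intro _; simpa using hI.empty_mem
  · intro a s _ _ ih hf
    rw [Set.biUnion_insert]
    exact hI.union_mem (hf a (Set.mem_insert _ _))
      (ih fun m hm => hf m (Set.mem_insert_of_mem _ hm))

end IsIdeal

/-- the key "sigma" property of a family of pairs `(z, A)` relative to ideals `I, J`. -/
def Qsig (I J : Set (Set ℕ)) (P : Set ((ℕ → ℕ) × Set ℕ)) : Prop :=
  ∀ B : Set ℕ, B ∉ J → ∃ E : Set ℕ, B ∩ E ∉ J ∧ ∀ p ∈ P, p.2 ∩ p.1 ⁻¹' E ∈ I

/-- small fibers (on the attached positive set) -/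
def SmallFib (I : Set (Set ℕ)) (p : (ℕ → ℕ) × Set ℕ) : Prop :=
  ∀ F : Set ℕ, F.Finite → p.2 ∩ p.1 ⁻¹' F ∈ I

lemma Qsig.mono {P P' : Set ((ℕ → ℕ) × Set ℕ)} (h : Qsig I J P) (hsub : P' ⊆ P) :
    Qsig I J P' := fun B hB => by
  obtain ⟨E, hE1, hE2⟩ := h B hB
  exact ⟨E, hE1, fun p hp => hE2 p (hsub hp)⟩

lemma Qsig.empty : Qsig I J ∅ := fun B hB =>
  ⟨Set.univ, by simpa using hB, fun p hp => absurd hp (Set.notMem_empty p)⟩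

lemma Qsig.insert_empty_snd (hI : IsIdeal I) {P : Set ((ℕ → ℕ) × Set ℕ)}
    (h : Qsig I J P) (z : ℕ → ℕ) : Qsig I J (P ∪ {(z, (∅ : Set ℕ))}) := fun B hB => by
  obtain ⟨E, hE1, hE2⟩ := h B hB
  refine ⟨E, hE1, fun p hp => ?_⟩
  rcases hp with hp | hp
  · exact hE2 p hp
  · rcases hp with rfl
    simpa using hI.empty_mem

end Construction

section Fsigma

variable {I J : Set (Set ℕ)}

lemma mem_J_iff_chi {F : ℕ → Set (ℕ → Bool)}
    (hFeq : {x : ℕ → Bool | {n : ℕ | x n = true} ∈ J} = ⋃ m, F m) (B : Set ℕ) :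
    B ∈ J ↔ ∃ m, chiFn B ∈ F m := by
  have h1 : chiFn B ∈ {x : ℕ → Bool | {n : ℕ | x n = true} ∈ J} ↔ B ∈ J := by
    simp [chiFn_set]
  rw [hFeq] at h1
  rw [← h1, Set.mem_iUnion]

lemma bool_eq_of_iff {b c : Bool} (h : b = true ↔ c = true) : b = c := by
  revert h; cases b <;> cases c <;> simp

lemma closedExit (hJ : IsIdeal J) (F : ℕ → Set (ℕ → Bool)) (hFcl : ∀ m, IsClosed (F m))
    (hFeq : {x : ℕ → Bool | {n : ℕ | x n = true} ∈ J} = ⋃ m, F m)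
    (m : ℕ) (D : Set ℕ) (hD : D ∉ J) (n₀ : ℕ) (s : Set ℕ) (hs : ∀ k ∈ s, k < n₀) :
    ∃ n' t, n₀ ≤ n' ∧ s ⊆ t ∧ (∀ k ∈ t, k ∈ s ∨ (k ∈ D ∧ n₀ ≤ k)) ∧ (∀ k ∈ t, k < n') ∧
      ∀ x : ℕ → Bool, (∀ k, k < n' → (x k = true ↔ k ∈ t)) → x ∉ F m := by
  by_contra hcon
  push_neg at hcon
  set L : Set ℕ := s ∪ {k | k ∈ D ∧ n₀ ≤ k} with hLdef
  have hLJ : L ∉ J := by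
    intro hLJ
    apply hD
    have hsub : D ⊆ L ∪ Set.Iio n₀ := by
      intro k hk
      by_cases h : n₀ ≤ k
      · exact Or.inl (Or.inr ⟨hk, h⟩)
      · exact Or.inr (not_le.1 h)
    exact hJ.mem_of_subset hsub (hJ.union_mem hLJ (hJ.finite_mem (Set.finite_Iio n₀)))
  -- witnesses
  have hw : ∀ j : ℕ, ∃ x, (∀ k, k < n₀ + j → (x k = true ↔ k ∈ L)) ∧ x ∈ F m := by
    intro j
    obtain ⟨x, hx1, hx2⟩ := hcon (n₀ + j) (L ∩ Set.Iio (n₀ + j))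
      (Nat.le_add_right _ _)
      (fun k hk => ⟨Or.inl hk, lt_of_lt_of_le (hs k hk) (Nat.le_add_right _ _)⟩)
      (fun k hk => hk.1)
      (fun k hk => hk.2)
    refine ⟨x, fun k hkl => ?_, hx2⟩
    rw [hx1 k hkl]
    constructor
    · exact fun h => h.1
    · exact fun h => ⟨h, hkl⟩
  choose xs hxs1 hxs2 using hw
  have htend : Filter.Tendsto xs Filter.atTop (nhds (chiFn L)) := by
    rw [tendsto_pi_nhds]
    intro k
    have : ∀ j, j ≥ k + 1 → xs j k = chiFn L k := by
      intro j hj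
      apply bool_eq_of_iff
      rw [chiFn_mem_iff]
      exact hxs1 j k (lt_of_lt_of_le (Nat.lt_succ_self k) (le_trans hj (Nat.le_add_left _ _)))
    exact Filter.Tendsto.congr' (Filter.eventually_atTop.2 ⟨k + 1, fun j hj => (this j hj).symm⟩)
      tendsto_const_nhds
  have hmem : chiFn L ∈ F m :=
    (hFcl m).mem_of_tendsto htend (Filter.Eventually.of_forall hxs2)
  exact hLJ ((mem_J_iff_chi hFeq L).2 ⟨m, hmem⟩)

end Fsigma

section QsigCountable

variable {I J : Set (Set ℕ)}

/-- invariant for the recursive construction inside `Qsig_of_countable`. -/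
abbrev GoodSt (I J : Set (Set ℕ)) (B : Set ℕ) (g : ℕ → (ℕ → ℕ) × Set ℕ)
    (m : ℕ) (st : Set ℕ × Set ℕ × ℕ) : Prop :=
  st.1 ∉ J ∧ st.1 ⊆ B ∧ (∀ k ∈ st.1, st.2.2 ≤ k) ∧ (∀ k ∈ st.2.1, k < st.2.2) ∧
    ∀ i, i < m → (g i).2 ∩ (g i).1 ⁻¹' st.1 ∈ I

lemma Qsig_of_countable (hI : IsIdeal I) (hJ : IsIdeal J) (hJF : IsFsigmaIdeal J)
    (P : Set ((ℕ → ℕ) × Set ℕ)) (hPc : P.Countable)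
    (hsf : ∀ p ∈ P, SmallFib I p)
    (hfin : ∀ S, S ⊆ P → S.Finite → Qsig I J S) : Qsig I J P := by
  classical
  intro B hB
  rcases P.eq_empty_or_nonempty with rfl | hPne
  · exact Qsig.empty B hB
  obtain ⟨g, hg⟩ := hPc.exists_eq_range hPne
  obtain ⟨F, hFcl, hFeq⟩ := hJF
  -- the step existence
  have hstep : ∀ m st, GoodSt I J B g m st → ∃ st' : Set ℕ × Set ℕ × ℕ,
      GoodSt I J B g (m+1) st' ∧ st'.1 ⊆ st.1 ∧ st.2.1 ⊆ st'.2.1 ∧ st.2.2 ≤ st'.2.2 ∧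
      (∀ k ∈ st'.2.1, k ∈ st.2.1 ∨ k ∈ st.1) ∧
      (∀ x : ℕ → Bool, (∀ k, k < st'.2.2 → (x k = true ↔ k ∈ st'.2.1)) → x ∉ F m) := by
    intro m st hGd
    obtain ⟨hst1, hst2, hst3, hst4, hst5⟩ := hGd
    have hSsub : g '' (Set.Iic m) ⊆ P := by
      rw [hg]
      rintro q ⟨i, _, rfl⟩
      exact Set.mem_range_self i
    have hSQ : Qsig I J (g '' (Set.Iic m)) := hfin _ hSsub ((Set.finite_Iic m).image g)
    obtain ⟨E, hE1, hE2⟩ := hSQ st.1 hst1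
    obtain ⟨n', t, hn'1, hn'2, hn'3, hn'4, hn'5⟩ :=
      closedExit hJ F hFcl hFeq m (st.1 ∩ E) hE1 st.2.2 st.2.1 hst4
    refine ⟨⟨(st.1 ∩ E) \ Set.Iio n', t, n'⟩, ⟨?_, ?_, ?_, ?_, ?_⟩, ?_, ?_, ?_, ?_, ?_⟩
    · exact hJ.diff_finite_not_mem hE1 (Set.finite_Iio n')
    · exact fun k hk => hst2 hk.1.1
    · exact fun k hk => not_lt.1 hk.2
    · exact hn'4
    · intro i hi
      have hiE : (g i).2 ∩ (g i).1 ⁻¹' E ∈ I :=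
        hE2 (g i) ⟨i, Nat.lt_succ_iff.1 hi, rfl⟩
      refine hI.mem_of_subset ?_ hiE
      intro x hx
      exact ⟨hx.1, hx.2.1.2⟩
    · exact fun k hk => hk.1.1
    · exact hn'2
    · exact hn'1
    · intro k hk
      rcases hn'3 k hk with h | h
      · exact Or.inl h
      · exact Or.inr h.1.1
    · exact hn'5
  -- the recursive sequence of states
  set seq : ℕ → Set ℕ × Set ℕ × ℕ := fun m => Nat.rec (⟨B, ∅, 0⟩)
    (fun m st => if h : GoodSt I J B g m st then (hstep m st h).choose else st) m with hseqDef
  have hseqS : ∀ m, seq (m+1) =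
      if h : GoodSt I J B g m (seq m) then (hstep m (seq m) h).choose else seq m := fun m => rfl
  have hGood : ∀ m, GoodSt I J B g m (seq m) := by
    intro m
    induction m with
    | zero =>
        exact ⟨hB, subset_rfl, fun k _ => Nat.zero_le k,
          fun k hk => absurd hk (Set.notMem_empty k),
          fun i hi => absurd hi (Nat.not_lt_zero i)⟩
    | succ m ih =>
        rw [hseqS m, dif_pos ih]
        exact (hstep m (seq m) ih).choose_spec.1
  have hex : ∀ m, (seq (m+1)).1 ⊆ (seq m).1 ∧ (seq m).2.1 ⊆ (seq (m+1)).2.1 ∧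
      (seq m).2.2 ≤ (seq (m+1)).2.2 ∧
      (∀ k ∈ (seq (m+1)).2.1, k ∈ (seq m).2.1 ∨ k ∈ (seq m).1) ∧
      (∀ x : ℕ → Bool, (∀ k, k < (seq (m+1)).2.2 → (x k = true ↔ k ∈ (seq (m+1)).2.1)) →
        x ∉ F m) := by
    intro m
    rw [hseqS m, dif_pos (hGood m)]
    exact (hstep m (seq m) (hGood m)).choose_spec.2
  -- chains
  have hBmono : ∀ m m', m ≤ m' → (seq m').1 ⊆ (seq m).1 := by
    intro m m' h
    induction m', h using Nat.le_induction with
    | base => exact subset_rfl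
    | succ m' hm ih => exact subset_trans (hex m').1 ih
  have hsmono : ∀ m m', m ≤ m' → (seq m).2.1 ⊆ (seq m').2.1 := by
    intro m m' h
    induction m', h using Nat.le_induction with
    | base => exact subset_rfl
    | succ m' hm ih => exact subset_trans ih (hex m').2.1
  have hnmono : ∀ m m', m ≤ m' → (seq m).2.2 ≤ (seq m').2.2 := by
    intro m m' h
    induction m', h using Nat.le_induction with
    | base => exact le_rfl
    | succ m' hm ih => exact le_trans ih (hex m').2.2.1
  -- the limit set
  set Sfin : Set ℕ := ⋃ m, (seq m).2.1 with hSdef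
  have hsB : ∀ m, (seq m).2.1 ⊆ B := by
    intro m
    induction m with
    | zero => exact fun k hk => absurd hk (Set.notMem_empty k)
    | succ m ih =>
        intro k hk
        rcases (hex m).2.2.2.1 k hk with h | h
        · exact ih h
        · exact (hGood m).2.1 h
  have hSB : Sfin ⊆ B := by
    intro k hk
    obtain ⟨m, hm⟩ := Set.mem_iUnion.1 hk
    exact hsB m hm
  -- agreement of Sfin with the finite stages
  have hagree : ∀ m k, k ∈ Sfin → k < (seq (m+1)).2.2 → k ∈ (seq (m+1)).2.1 := by
    intro m k hk hkn
    obtain ⟨m', hm'⟩ := Set.mem_iUnion.1 hk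
    by_cases h : m' ≤ m + 1
    · exact hsmono m' (m+1) h hm'
    · have h' : m + 1 ≤ m' := le_of_not_ge h
      clear h
      have key : ∀ l, m + 1 ≤ l → k ∈ (seq l).2.1 → k ∈ (seq (m+1)).2.1 := by
        intro l hl
        induction l, hl using Nat.le_induction with
        | base => exact fun h => h
        | succ l hml ih =>
            intro hkl
            rcases (hex l).2.2.2.1 k hkl with h1 | h1
            · exact ih h1
            · exfalso
              have h2 : (seq l).2.2 ≤ k := (hGood l).2.2.1 k h1
              have h3 : (seq (m+1)).2.2 ≤ k := le_trans (hnmono (m+1) l hml) h2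
              omega
      exact key m' h' hm'
  -- Sfin is J-positive
  have hSJ : Sfin ∉ J := by
    intro hSJ
    obtain ⟨m, hm⟩ := (mem_J_iff_chi hFeq Sfin).1 hSJ
    apply (hex m).2.2.2.2 (chiFn Sfin) _ hm
    intro k hkn
    rw [chiFn_mem_iff]
    constructor
    · exact fun h => hagree m k h hkn
    · exact fun h => Set.mem_iUnion.2 ⟨m+1, h⟩
  -- conclusion
  refine ⟨Sfin, ?_, ?_⟩
  · rwa [Set.inter_eq_self_of_subset_right hSB]
  · intro p hp
    rw [hg] at hp
    obtain ⟨i, rfl⟩ := hp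
    have hdecomp : ∀ m, (seq m).2.1 ⊆ (seq (i+1)).2.1 ∪ (seq (i+1)).1 := by
      intro m
      induction m with
      | zero => exact fun k hk => absurd hk (Set.notMem_empty k)
      | succ m ih =>
          by_cases h : m + 1 ≤ i + 1
          · exact fun k hk => Or.inl (hsmono _ _ h hk)
          · intro k hk
            rcases (hex m).2.2.2.1 k hk with h1 | h1
            · exact ih h1
            · exact Or.inr (hBmono (i+1) m (by omega) h1)
    have hSsub : Sfin ⊆ (seq (i+1)).2.1 ∪ (seq (i+1)).1 := by
      intro k hk
      obtain ⟨m, hm⟩ := Set.mem_iUnion.1 hk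
      exact hdecomp m hm
    have hsfin : ((seq (i+1)).2.1 : Set ℕ).Finite :=
      (Set.finite_Iio (seq (i+1)).2.2).subset (fun k hk => (hGood (i+1)).2.2.2.1 k hk)
    have h1 : (g i).2 ∩ (g i).1 ⁻¹' ((seq (i+1)).2.1) ∈ I :=
      hsf (g i) (by rw [hg]; exact Set.mem_range_self i) _ hsfin
    have h2 : (g i).2 ∩ (g i).1 ⁻¹' ((seq (i+1)).1) ∈ I :=
      (hGood (i+1)).2.2.2.2 i (Nat.lt_succ_self i)
    refine hI.mem_of_subset ?_ (hI.union_mem h1 h2)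
    intro x hx
    rcases hSsub hx.2 with h | h
    · exact Or.inl ⟨hx.1, h⟩
    · exact Or.inr ⟨hx.1, h⟩

end QsigCountable

section Extension

variable {I J : Set (Set ℕ)}

/-- Key extension lemma: assuming `¬ BWle J I`, every sequence `z` with small fibers on a
co-small set `N` admits a positive `A ⊆ N` extending a given `Qsig` family. -/
lemma exists_extension (hI : IsIdeal I) (hJ : IsIdeal J) (hn : ¬ BWle J I)
    (P : Set ((ℕ → ℕ) × Set ℕ)) (hP : Qsig I J P)
    (z : ℕ → ℕ) (N : Set ℕ) (hNc : Set.univ \ N ∈ I)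
    (hsf : ∀ F : Set ℕ, F.Finite → N ∩ z ⁻¹' F ∈ I) :
    ∃ A : Set ℕ, A ⊆ N ∧ A ∉ I ∧ (∀ F : Set ℕ, F.Finite → A ∩ z ⁻¹' F ∈ I) ∧
      Qsig I J (P ∪ {(z, A)}) := by
  by_contra hno
  push_neg at hno
  apply hn
  refine ⟨z, ?_⟩
  intro A' hA'
  set A : Set ℕ := A' ∩ N with hAdef
  have hA : A ∉ I := by
    intro hAI
    apply hA'
    have : A' ⊆ A ∪ (Set.univ \ N) := by
      intro x hx
      by_cases h : x ∈ N
      · exact Or.inl ⟨hx, h⟩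
      · exact Or.inr ⟨trivial, h⟩
    exact hI.mem_of_subset this (hI.union_mem hAI hNc)
  have hAsf : ∀ F : Set ℕ, F.Finite → A ∩ z ⁻¹' F ∈ I := by
    intro F hF
    refine hI.mem_of_subset ?_ (hsf F hF)
    intro x hx
    exact ⟨hx.1.2, hx.2⟩
  have hQfail := hno A (fun x hx => hx.2) hA hAsf
  -- hQfail : ¬ Qsig I J (P ∪ {(z, A)})
  rw [Qsig] at hQfail
  push_neg at hQfail
  obtain ⟨B₀, hB₀, hBad⟩ := hQfail
  -- hBad : ∀ E, B₀ ∩ E ∉ J → ∃ p ∈ P ∪ {(z,A)}, ¬ (p.2 ∩ p.1⁻¹' E ∈ I)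
  have hBad' : ∀ E : Set ℕ, (∀ p ∈ P, p.2 ∩ p.1 ⁻¹' E ∈ I) → A ∩ z ⁻¹' E ∈ I →
      B₀ ∩ E ∈ J := by
    intro E holds hnew
    by_contra hEJ
    obtain ⟨p, hp, hpI⟩ := hBad E hEJ
    rcases hp with hp | hp
    · exact hpI (holds p hp)
    · rcases hp with rfl
      exact hpI hnew
  obtain ⟨E₀, hE₀J, hE₀olds⟩ := hP B₀ hB₀
  refine ⟨B₀ ∩ E₀ ∩ (z '' A), ?_, ?_, ?_⟩
  · intro b hb
    obtain ⟨x, hxA, rfl⟩ := hb.2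
    exact ⟨x, hxA.1, rfl⟩
  · -- B₀ ∩ E₀ ∩ z '' A ∉ J
    intro hBJ
    apply hE₀J
    have hE₁ : B₀ ∩ (E₀ \ (z '' A)) ∈ J := by
      apply hBad' (E₀ \ (z '' A))
      · intro p hp
        refine hI.mem_of_subset ?_ (hE₀olds p hp)
        intro x hx
        exact ⟨hx.1, hx.2.1⟩
      · have : A ∩ z ⁻¹' (E₀ \ z '' A) = ∅ := by
          ext x
          simp only [Set.mem_inter_iff, Set.mem_preimage, Set.mem_diff, Set.mem_empty_iff_false,
            iff_false]
          rintro ⟨hxA, -, hxim⟩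
          exact hxim ⟨x, hxA, rfl⟩
        rw [this]
        exact hI.empty_mem
    have hsub : B₀ ∩ E₀ ⊆ (B₀ ∩ (E₀ \ z '' A)) ∪ (B₀ ∩ E₀ ∩ z '' A) := by
      intro x hx
      by_cases h : x ∈ z '' A
      · exact Or.inr ⟨hx, h⟩
      · exact Or.inl ⟨hx.1, hx.2, h⟩
    exact hJ.mem_of_subset hsub (hJ.union_mem hE₁ hBJ)
  · -- the key property
    intro C hC
    have hE₂ : B₀ ∩ (C ∩ E₀) ∉ J := by
      intro h
      apply hC
      refine hJ.mem_of_subset ?_ h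
      intro x hx
      exact ⟨hx.2.1.1, hx.1, hx.2.1.2⟩
    have hnew : A ∩ z ⁻¹' (C ∩ E₀) ∉ I := by
      intro h
      apply hE₂
      apply hBad' (C ∩ E₀) _ h
      intro p hp
      refine hI.mem_of_subset ?_ (hE₀olds p hp)
      intro x hx
      exact ⟨hx.1, hx.2.2⟩
    refine hI.not_mem_of_superset hnew ?_
    intro x hx
    exact ⟨hx.1.1, hx.2.1⟩
end Extension

section OmegaOne

open Cardinal

/-- the ordinal `ω₁` as a type -/
noncomputable abbrev Om : Type := (Cardinal.aleph 1).ord.ToType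

lemma Om_Iio_countable (a : Om) : (Set.Iio a).Countable :=
  (Cardinal.countable_iff_lt_aleph_one _).2 (Cardinal.mk_Iio_ord_toType a)

lemma Om_Iic_countable (a : Om) : (Set.Iic a).Countable := by
  rw [← Set.Iio_insert]
  exact (Om_Iio_countable a).insert a

lemma Om_uncountable : ¬ (Set.univ : Set Om).Countable := by
  intro h
  rw [Set.countable_univ_iff] at h
  have h1 : #Om ≤ Cardinal.aleph0 := Cardinal.mk_le_aleph0_iff.2 h
  rw [Cardinal.mk_ord_toType] at h1
  exact absurd h1 (not_le.2 Cardinal.aleph0_lt_aleph_one)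

lemma Om_bound {R : Set Om} (hR : R.Countable) : ∃ b : Om, ∀ r ∈ R, r < b := by
  have hU : (⋃ r ∈ R, Set.Iic r).Countable := hR.biUnion (fun r _ => Om_Iic_countable r)
  have hne : (⋃ r ∈ R, Set.Iic r) ≠ Set.univ := by
    intro h
    exact Om_uncountable (h ▸ hU)
  obtain ⟨b, hb⟩ := (Set.ne_univ_iff_exists_notMem _).1 hne
  refine ⟨b, fun r hr => ?_⟩
  by_contra hcon
  exact hb (Set.mem_biUnion hr (not_lt.1 hcon))

end OmegaOne

section PairRecursion

open Classical

variable (I J : Set (Set ℕ))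

/-- the gate condition at a stage of the recursion -/
def pairGate (prev : Set ((ℕ → ℕ) × Set ℕ)) (q : (ℕ → ℕ) × Set ℕ) : Prop :=
  ∃ A : Set ℕ, A ⊆ q.2 ∧ A ∉ I ∧ (∀ F : Set ℕ, F.Finite → A ∩ q.1 ⁻¹' F ∈ I) ∧
    Qsig I J (prev ∪ {(q.1, A)})

variable (e : Om → (ℕ → ℕ) × Set ℕ)

/-- the transfinite recursion assigning to each stage of `ω₁` a pair `(z, A)`. -/
noncomputable def pairF : Om → (ℕ → ℕ) × Set ℕ :=
  WellFounded.fix wellFounded_lt (fun α rec =>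
    if h : pairGate I J {q | ∃ β : Om, ∃ _ : β < α, rec β ‹β < α› = q} (e α)
    then ((e α).1, h.choose) else (fun _ => 0, (∅ : Set ℕ)))

lemma pairF_eq (α : Om) : pairF I J e α =
    if h : pairGate I J (pairF I J e '' Set.Iio α) (e α)
    then ((e α).1, h.choose) else (fun _ => 0, (∅ : Set ℕ)) := by
  have hset : {q | ∃ β : Om, ∃ _ : β < α, pairF I J e β = q} = pairF I J e '' Set.Iio α := by
    ext q
    constructor
    · rintro ⟨β, hβ, rfl⟩; exact ⟨β, hβ, rfl⟩
    · rintro ⟨β, hβ, rfl⟩; exact ⟨β, hβ, rfl⟩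
  have hunf : pairF I J e α =
      if h : pairGate I J {q | ∃ β : Om, ∃ _ : β < α, pairF I J e β = q} (e α)
      then ((e α).1, h.choose) else (fun _ => 0, (∅ : Set ℕ)) :=
    WellFounded.fix_eq _ _ _
  rw [hunf]
  simp only [hset]

lemma pairF_smallFib (hI : IsIdeal I) (α : Om) : SmallFib I (pairF I J e α) := by
  rw [pairF_eq]
  split_ifs with h
  · intro F hF
    exact h.choose_spec.2.2.1 F hF
  · intro F hF
    simpa using hI.empty_mem

variable {I J e}

lemma Qsig_Iio_of_Iic (hI : IsIdeal I) (hJ : IsIdeal J) (hJF : IsFsigmaIdeal J) (α : Om)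
    (IH : ∀ β : Om, β < α → Qsig I J (pairF I J e '' Set.Iic β)) :
    Qsig I J (pairF I J e '' Set.Iio α) := by
  apply Qsig_of_countable hI hJ hJF _ ((Om_Iio_countable α).image _)
  · rintro p ⟨β, _, rfl⟩
    exact pairF_smallFib I J e hI β
  · intro S hS hSfin
    rcases S.eq_empty_or_nonempty with rfl | hSne
    · exact Qsig.empty
    have hchoice : ∀ q ∈ S, ∃ β : Om, β < α ∧ pairF I J e β = q := by
      intro q hq
      obtain ⟨β, hβ, rfl⟩ := hS hq
      exact ⟨β, hβ, rfl⟩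
    classical
    obtain ⟨q0, hq0⟩ := hSne
    obtain ⟨β0, hβ0, hq0eq⟩ := hchoice q0 hq0
    set pick : (ℕ → ℕ) × Set ℕ → Om := fun q =>
      if h : ∃ β : Om, β < α ∧ pairF I J e β = q then h.choose else β0 with hpickdef
    have hpick : ∀ q ∈ S, pick q < α ∧ pairF I J e (pick q) = q := by
      intro q hq
      have h := hchoice q hq
      simp only [hpickdef, dif_pos h]
      exact h.choose_spec
    set u : Set Om := pick '' S with hudef
    have hufin : u.Finite := hSfin.image pick
    have hune : u.Nonempty := ⟨pick q0, q0, hq0, rfl⟩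
    have husub : ∀ β ∈ u, β < α := by
      rintro β ⟨q, hq, rfl⟩
      exact (hpick q hq).1
    obtain ⟨β, hβu, hβmax⟩ := Set.Finite.exists_maximalFor id u hufin hune
    have hmax : ∀ β' ∈ u, β' ≤ β := by
      intro β' hβ'
      rcases le_or_gt β' β with h | h
      · exact h
      · exact (hβmax hβ' h.le).ge
    have hsub : S ⊆ pairF I J e '' Set.Iic β := by
      intro q hq
      refine ⟨pick q, hmax _ ⟨q, hq, rfl⟩, (hpick q hq).2⟩
    exact Qsig.mono (IH β (husub β hβu)) hsub

lemma Qsig_Iic (hI : IsIdeal I) (hJ : IsIdeal J) (hJF : IsFsigmaIdeal J) (α : Om) :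
    Qsig I J (pairF I J e '' Set.Iic α) := by
  refine wellFounded_lt.induction (C := fun α => Qsig I J (pairF I J e '' Set.Iic α)) α ?_
  intro x IH
  have hIio : Qsig I J (pairF I J e '' Set.Iio x) := Qsig_Iio_of_Iic hI hJ hJF x IH
  have himg : pairF I J e '' Set.Iic x = pairF I J e '' Set.Iio x ∪ {pairF I J e x} := by
    rw [← Set.Iio_insert, Set.image_insert_eq, Set.union_singleton]
  rw [himg]
  by_cases h : pairGate I J (pairF I J e '' Set.Iio x) (e x)
  · have hx : pairF I J e x = ((e x).1, h.choose) := by rw [pairF_eq, dif_pos h]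
    rw [hx]
    exact h.choose_spec.2.2.2
  · have hx : pairF I J e x = (fun _ => 0, (∅ : Set ℕ)) := by rw [pairF_eq, dif_neg h]
    rw [hx]
    exact Qsig.insert_empty_snd hI hIio _

lemma Qsig_Iio (hI : IsIdeal I) (hJ : IsIdeal J) (hJF : IsFsigmaIdeal J) (α : Om) :
    Qsig I J (pairF I J e '' Set.Iio α) :=
  Qsig_Iio_of_Iic hI hJ hJF α (fun β _ => Qsig_Iic hI hJ hJF β)

end PairRecursion

section Space

variable (I J : Set (Set ℕ)) (e : Om → (ℕ → ℕ) × Set ℕ)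

/-- openness predicate for the counterexample space -/
def IsOpenX (U : Set (ℕ ⊕ Om)) : Prop :=
  ∀ α : Om, Sum.inr α ∈ U →
    ((∃ β : Om, β < α) → ∃ γ : Om, γ < α ∧ ∀ δ : Om, γ < δ → δ < α → Sum.inr δ ∈ U) ∧
    (pairF I J e α).2 \ (pairF I J e α).1 ⁻¹' {m : ℕ | Sum.inl m ∈ U} ∈ I

lemma isOpenX_univ (hI : IsIdeal I) : IsOpenX I J e Set.univ := by
  intro α _
  constructor
  · rintro ⟨β, hβ⟩
    exact ⟨β, hβ, fun δ _ _ => Set.mem_univ _⟩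
  · have h1 : {m : ℕ | Sum.inl m ∈ (Set.univ : Set (ℕ ⊕ Om))} = Set.univ := by
      ext m; simp
    rw [h1, Set.preimage_univ, Set.diff_univ]
    exact hI.empty_mem

lemma isOpenX_inter (hI : IsIdeal I) (U V : Set (ℕ ⊕ Om))
    (hU : IsOpenX I J e U) (hV : IsOpenX I J e V) : IsOpenX I J e (U ∩ V) := by
  intro α hα
  obtain ⟨hUt, hUtr⟩ := hU α hα.1
  obtain ⟨hVt, hVtr⟩ := hV α hα.2
  constructor
  · intro hex
    obtain ⟨γ1, hγ1, h1⟩ := hUt hex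
    obtain ⟨γ2, hγ2, h2⟩ := hVt hex
    refine ⟨max γ1 γ2, max_lt hγ1 hγ2, fun δ hδ1 hδ2 => ?_⟩
    exact ⟨h1 δ (lt_of_le_of_lt (le_max_left _ _) hδ1) hδ2,
      h2 δ (lt_of_le_of_lt (le_max_right _ _) hδ1) hδ2⟩
  · refine hI.mem_of_subset ?_ (hI.union_mem hUtr hVtr)
    rintro x ⟨hxA, hxP⟩
    simp only [Set.mem_preimage, Set.mem_setOf_eq, Set.mem_inter_iff, not_and] at hxP
    by_cases hxU : Sum.inl ((pairF I J e α).1 x) ∈ U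
    · exact Or.inr ⟨hxA, fun hc => hxP hxU hc⟩
    · exact Or.inl ⟨hxA, hxU⟩

lemma isOpenX_sUnion (hI : IsIdeal I) (S : Set (Set (ℕ ⊕ Om)))
    (hS : ∀ U ∈ S, IsOpenX I J e U) : IsOpenX I J e (⋃₀ S) := by
  intro α hα
  obtain ⟨U, hUS, hαU⟩ := hα
  obtain ⟨hUt, hUtr⟩ := hS U hUS α hαU
  constructor
  · intro hex
    obtain ⟨γ, hγ, h1⟩ := hUt hex
    exact ⟨γ, hγ, fun δ h2 h3 => Set.mem_sUnion.2 ⟨U, hUS, h1 δ h2 h3⟩⟩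
  · refine hI.mem_of_subset ?_ hUtr
    rintro x ⟨hxA, hxP⟩
    refine ⟨hxA, fun hc => hxP ?_⟩
    exact Set.mem_sUnion.2 ⟨U, hUS, hc⟩

/-- the topology of the counterexample space -/
noncomputable def topoX (hI : IsIdeal I) : TopologicalSpace (ℕ ⊕ Om) where
  IsOpen := IsOpenX I J e
  isOpen_univ := isOpenX_univ I J e hI
  isOpen_inter := isOpenX_inter I J e hI
  isOpen_sUnion := isOpenX_sUnion I J e hI

variable {I J}

/-- identity sequence has no J-convergence anywhere -/
lemma killX (hI : IsIdeal I) (hJ : IsIdeal J) (hJF : IsFsigmaIdeal J)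
    (B : Set ℕ) (hB : B ∉ J) (p : ℕ ⊕ Om) :
    ∃ U : Set (ℕ ⊕ Om), IsOpenX I J e U ∧ p ∈ U ∧
      {n ∈ B | (Sum.inl n : ℕ ⊕ Om) ∉ U} ∉ J := by
  cases p with
  | inl m =>
      refine ⟨{Sum.inl m}, ?_, rfl, ?_⟩
      · intro α hα
        simp at hα
      · have h1 : {n ∈ B | (Sum.inl n : ℕ ⊕ Om) ∉ ({Sum.inl m} : Set (ℕ ⊕ Om))} = B \ {m} := by
          ext n
          simp [Sum.inl.injEq]
        rw [h1]
        exact hJ.diff_finite_not_mem hB (Set.finite_singleton m)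
  | inr α =>
      obtain ⟨E, hE1, hE2⟩ := Qsig_Iic (e := e) hI hJ hJF α B hB
      set U : Set (ℕ ⊕ Om) := Sum.inr '' Set.Iic α ∪ Sum.inl '' {m : ℕ | m ∉ E} with hUdef
      have hUinl : ∀ m : ℕ, (Sum.inl m : ℕ ⊕ Om) ∈ U ↔ m ∉ E := by
        intro m
        constructor
        · rintro (⟨γ, _, hγ⟩ | ⟨m', hm', hm'eq⟩)
          · exact absurd hγ (by simp)
          · exact (Sum.inl_injective hm'eq) ▸ hm'
        · intro hm
          exact Or.inr ⟨m, hm, rfl⟩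
      refine ⟨U, ?_, Or.inl ⟨α, Set.mem_Iic.2 le_rfl, rfl⟩, ?_⟩
      · intro β hβ
        have hβα : β ≤ α := by
          rcases hβ with ⟨γ, hγ, hγeq⟩ | ⟨m', _, hm'eq⟩
          · exact Set.mem_Iic.1 ((Sum.inr_injective hγeq) ▸ hγ)
          · exact absurd hm'eq (by simp)
        constructor
        · rintro ⟨β', hβ'⟩
          exact ⟨β', hβ', fun δ _ hδ => Or.inl ⟨δ, Set.mem_Iic.2 (hδ.le.trans hβα), rfl⟩⟩
        · have h2 : (pairF I J e β).2 \ (pairF I J e β).1 ⁻¹' {m : ℕ | Sum.inl m ∈ U} =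
              (pairF I J e β).2 ∩ (pairF I J e β).1 ⁻¹' E := by
            ext x
            simp only [Set.mem_diff, Set.mem_preimage, Set.mem_setOf_eq, Set.mem_inter_iff,
              hUinl, not_not]
          rw [h2]
          exact hE2 _ ⟨β, hβα, rfl⟩
      · have h3 : {n ∈ B | (Sum.inl n : ℕ ⊕ Om) ∉ U} = B ∩ E := by
          ext n
          simp only [Set.mem_setOf_eq, Set.mem_inter_iff, hUinl, not_not]
        rw [h3]
        exact hE1

end Space

section BWI

variable {I J : Set (Set ℕ)} (e : Om → (ℕ → ℕ) × Set ℕ)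

lemma bwIX (hI : IsIdeal I) (hJ : IsIdeal J) (hJF : IsFsigmaIdeal J)
    (hn : ¬ BWle J I) (hesurj : Function.Surjective e) (y : ℕ → ℕ ⊕ Om) :
    ∃ A : Set ℕ, A ∉ I ∧ ∃ p : ℕ ⊕ Om,
      ∀ U : Set (ℕ ⊕ Om), IsOpenX I J e U → p ∈ U → {n ∈ A | y n ∉ U} ∈ I := by
  classical
  by_cases hNr : {n : ℕ | ∃ α : Om, y n = Sum.inr α} ∉ I
  · -- case: the ordinal part is positive; use the minimum argument
    have hR : {α : Om | ∃ n, y n = Sum.inr α}.Countable := by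
      have hsub : {α : Om | ∃ n, y n = Sum.inr α} ⊆ ⋃ n : ℕ, {α : Om | y n = Sum.inr α} := by
        rintro α ⟨n, hn⟩
        exact Set.mem_iUnion.2 ⟨n, hn⟩
      refine Set.Countable.mono hsub (Set.countable_iUnion fun n => ?_)
      apply Set.Subsingleton.countable
      intro α hα β hβ
      exact Sum.inr_injective (hα.symm.trans hβ)
    obtain ⟨b, hb⟩ := Om_bound hR
    set T : Set Om := {lam : Om | y ⁻¹' (Sum.inr '' Set.Iic lam) ∉ I} with hTdef
    have hbT : b ∈ T := by
      refine hI.not_mem_of_superset hNr ?_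
      rintro n ⟨α, hα⟩
      exact ⟨α, Set.mem_Iic.2 (hb α ⟨n, hα⟩).le, hα.symm⟩
    have hTne : T.Nonempty := ⟨b, hbT⟩
    set lam := wellFounded_lt.min T hTne with hlamdef
    have hmem : y ⁻¹' (Sum.inr '' Set.Iic lam) ∉ I := wellFounded_lt.min_mem T hTne
    have hlow : ∀ γ : Om, γ < lam → y ⁻¹' (Sum.inr '' Set.Iic γ) ∈ I := by
      intro γ hγ
      by_contra hcon
      exact wellFounded_lt.not_lt_min T hcon hγ
    refine ⟨y ⁻¹' (Sum.inr '' Set.Iic lam), hmem, Sum.inr lam, ?_⟩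
    intro U hU hpU
    by_cases hex : ∃ β : Om, β < lam
    · obtain ⟨γ, hγ, htail⟩ := (hU lam hpU).1 hex
      refine hI.mem_of_subset ?_ (hlow γ hγ)
      rintro n ⟨hnA, hnU⟩
      obtain ⟨δ, hδ, hδeq⟩ := hnA
      refine ⟨δ, Set.mem_Iic.2 ?_, hδeq⟩
      by_contra hcon
      push_neg at hcon
      rcases lt_or_eq_of_le (Set.mem_Iic.1 hδ) with h | h
      · exact hnU (hδeq ▸ htail δ hcon h)
      · rw [h] at hδeq
        exact hnU (hδeq ▸ hpU)
    · have hempty : {n ∈ y ⁻¹' (Sum.inr '' Set.Iic lam) | y n ∉ U} = ∅ := by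
        ext n
        simp only [Set.mem_setOf_eq, Set.mem_empty_iff_false, iff_false, not_and]
        rintro ⟨δ, hδ, hδeq⟩ hnU
        have : δ = lam := by
          by_contra hne
          exact hex ⟨δ, lt_of_le_of_ne (Set.mem_Iic.1 hδ) hne⟩
        rw [this] at hδeq
        exact hnU (hδeq ▸ hpU)
      rw [hempty]
      exact hI.empty_mem
  · -- ordinal part small
    rw [not_not] at hNr
    by_cases hfib : ∃ m : ℕ, y ⁻¹' {Sum.inl m} ∉ I
    · obtain ⟨m, hm⟩ := hfib
      refine ⟨y ⁻¹' {Sum.inl m}, hm, Sum.inl m, ?_⟩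
      intro U hU hpU
      have hempty : {n ∈ y ⁻¹' {Sum.inl m} | y n ∉ U} = ∅ := by
        ext n
        simp only [Set.mem_setOf_eq, Set.mem_preimage, Set.mem_singleton_iff,
          Set.mem_empty_iff_false, iff_false, not_and]
        intro h
        rw [h]
        simpa using hpU
      rw [hempty]
      exact hI.empty_mem
    · push_neg at hfib
      set N : Set ℕ := {n | ∃ m : ℕ, y n = Sum.inl m} with hNdef
      set z : ℕ → ℕ := fun n => if h : ∃ m : ℕ, y n = Sum.inl m then h.choose else 0 with hzdef
      have hzN : ∀ n ∈ N, y n = Sum.inl (z n) := by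
        intro n hn
        have h1 : z n = hn.choose := dif_pos hn
        rw [h1]
        exact hn.choose_spec
      have hNc : Set.univ \ N ∈ I := by
        refine hI.mem_of_subset ?_ hNr
        rintro n ⟨-, hn⟩
        cases hyn : y n with
        | inl m => exact absurd ⟨m, hyn⟩ hn
        | inr α => exact ⟨α, hyn⟩
      have hsfN : ∀ F : Set ℕ, F.Finite → N ∩ z ⁻¹' F ∈ I := by
        intro F hF
        refine hI.mem_of_subset ?_
          (hI.biUnion_finite_mem hF (fun m => y ⁻¹' {Sum.inl m}) (fun m _ => hfib m))
        rintro n ⟨hnN, hnF⟩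
        refine Set.mem_biUnion hnF ?_
        rw [Set.mem_preimage, hzN n hnN]
        rfl
      obtain ⟨α, hα⟩ := hesurj (z, N)
      have hGate : pairGate I J (pairF I J e '' Set.Iio α) (e α) := by
        rw [hα]
        exact exists_extension hI hJ hn _ (Qsig_Iio hI hJ hJF α) z N hNc hsfN
      have hpair : pairF I J e α = ((e α).1, hGate.choose) := by
        rw [pairF_eq, dif_pos hGate]
      obtain ⟨hA1, hA2, hA3, hA4⟩ := hGate.choose_spec
      have he1 : (e α).1 = z := by rw [hα]
      have he2 : (e α).2 = N := by rw [hα]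
      have hA1' : Exists.choose hGate ⊆ N := fun x hx => he2 ▸ hA1 hx
      refine ⟨hGate.choose, hA2, Sum.inr α, ?_⟩
      intro U hU hpU
      have htr := (hU α hpU).2
      rw [hpair] at htr
      refine hI.mem_of_subset ?_ htr
      rintro n ⟨hnA, hnU⟩
      refine ⟨hnA, ?_⟩
      intro hc
      rw [Set.mem_preimage, he1] at hc
      exact hnU (by rw [hzN n (hA1' hnA)]; exact hc)

end BWI

lemma CH_down (h : Cardinal.continuum.{u} = Cardinal.aleph.{u} 1) :
    Cardinal.continuum.{0} = Cardinal.aleph.{0} 1 := by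
  apply Cardinal.lift_injective.{u, 0}
  rw [Cardinal.lift_continuum, Cardinal.lift_aleph, Ordinal.lift_one]
  exact h

theorem stmt19 (hCH : Cardinal.continuum = Cardinal.aleph 1)
    (I J : Set (Set ℕ)) (hI : IsIdeal I) (hJ : IsIdeal J)
    (hIF : IsFsigmaIdeal I) (hJF : IsFsigmaIdeal J) :
    BWle J I ↔
      ∀ (X : Type) [TopologicalSpace X], BWProp I X → BWProp J X := by
  constructor
  · rintro ⟨f, hf⟩ X _ hBWI x
    obtain ⟨A, hA, p, hconv⟩ := hBWI (fun n => x (f n))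
    obtain ⟨B, hBsub, hBJ, hC⟩ := hf A hA
    refine ⟨B, hBJ, p, ?_⟩
    intro U hU hpU
    by_contra hne
    have h1 : {m : ℕ | x m ∉ U} ∩ B ∉ J := by
      intro hmem
      apply hne
      refine hJ.mem_of_subset ?_ hmem
      rintro m ⟨hmB, hmU⟩
      exact ⟨hmU, hmB⟩
    have h2 := hC {m : ℕ | x m ∉ U} h1
    apply h2
    refine hI.mem_of_subset ?_ (hconv U hU hpU)
    rintro n ⟨hnA, hnC⟩
    exact ⟨hnA, hnC⟩
  · intro h
    by_contra hn
    have hCH0 := CH_down hCH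
    have hcard : Cardinal.mk Om = Cardinal.mk ((ℕ → ℕ) × Set ℕ) := by
      rw [Cardinal.mk_ord_toType, ← hCH0]
      rw [Cardinal.mk_prod, Cardinal.mk_set]
      simp only [Cardinal.mk_nat, Cardinal.lift_id]
      rw [← Cardinal.power_def ℕ ℕ, Cardinal.mk_nat, Cardinal.aleph0_power_aleph0,
        Cardinal.two_power_aleph0, Cardinal.continuum_mul_self]
    obtain ⟨eqv⟩ := Cardinal.eq.1 hcard
    set e : Om → (ℕ → ℕ) × Set ℕ := ⇑eqv with hedef
    have hesurj : Function.Surjective e := eqv.surjective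
    letI : TopologicalSpace (ℕ ⊕ Om) := topoX I J e hI
    have hBWI : BWProp I (ℕ ⊕ Om) := by
      intro y
      obtain ⟨A, hA, p, hp⟩ := bwIX e hI hJ hJF hn hesurj y
      exact ⟨A, hA, p, fun U hU hpU => hp U hU hpU⟩
    obtain ⟨B, hB, p, hconv⟩ := h (ℕ ⊕ Om) hBWI (fun n => Sum.inl n)
    obtain ⟨U, hUopen, hpU, hUbad⟩ := killX e hI hJ hJF B hB p
    exact hUbad (hconv U hUopen hpU)
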